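/- Write f ∈ V ⊗ ℂ(z_1,…,z_n,h) in coordinates as f = Σ_I f_I v_I with f_I ∈ ℂ(z_1,…,z_n,h), the sum over all decompositions I. Then f is invariant with respect to the S_n^+-action (resp. the S_n^−-action) if and only if f_{σ(I)} = ŝ_σ^+ f_I (resp. f_{σ(I)} = ŝ_σ^− f_I) for every decomposition I and every σ ∈ S_n. -/

import Mathlib

/-!
Applying the involution `f ↦ f^{s_i}` to the identity `s_i^± f = f` turns it, coordinate by
coordinate, into `f_{s_i(I)} = ŝ_i^± f_I`. The set of `σ` with `f_{σ(I)} = ŝ_σ^± f_I` for all `I`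
is a submonoid of `S_n`, so it is everything as soon as it contains the elementary
transpositions.
-/

open scoped BigOperators

noncomputable section

namespace GRTV

/-- The field `ℂ(z_1,…,z_n,h)` of rational functions. -/
abbrev K (n : ℕ) : Type := FractionRing (MvPolynomial (Fin n ⊕ Unit) ℂ)

/-- The variable `z_i`. -/
def z {n : ℕ} (i : Fin n) : K n :=
  algebraMap (MvPolynomial (Fin n ⊕ Unit) ℂ) (K n) (MvPolynomial.X (Sum.inl i))

/-- The variable `h`. -/
def hvar {n : ℕ} : K n :=
  algebraMap (MvPolynomial (Fin n ⊕ Unit) ℂ) (K n) (MvPolynomial.X (Sum.inr ()))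

/-- The field automorphism of `ℂ(z_1,…,z_n,h)` permuting the variables `z_i` by `σ`
(and fixing `h`); `f ↦ f^σ`. -/
def permK {n : ℕ} (σ : Equiv.Perm (Fin n)) : K n ≃+* K n :=
  IsFractionRing.ringEquivOfRingEquiv
    (MvPolynomial.renameEquiv ℂ (Equiv.sumCongr σ (Equiv.refl Unit))).toRingEquiv

/-- `V ⊗ ℂ(z_1,…,z_n,h)` in coordinates: a vector is the family of its coordinates
in the basis `{v_I}`, where a basis index (a decomposition `I`) is recorded as the word
`m : Fin n → Fin N` with `I_j = m⁻¹(j)`. -/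
abbrev VV (n N : ℕ) : Type := (Fin n → Fin N) → K n

/-- `h` for the `+` case (`ε = true`) and `-h` for the `−` case (`ε = false`). -/
def sign' {n : ℕ} (ε : Bool) : K n := if ε then hvar else -hvar

def fin1 {n : ℕ} (i : ℕ) (hi : i + 1 < n) : Fin n := ⟨i, Nat.lt_of_succ_lt hi⟩
def fin2 {n : ℕ} (i : ℕ) (hi : i + 1 < n) : Fin n := ⟨i + 1, hi⟩

/-- The operator `s_i^±` (`ε = true` for `+`, `ε = false` for `−`):
`s_i^± f = ((z_i−z_{i+1})P^{(i,i+1)} ∓ h)/(z_i−z_{i+1}) · f^{s_i} ± h/(z_i−z_{i+1}) · f`.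
Here `P^{(i,i+1)}` acts on coordinates by precomposing the word with the transposition,
and `f^{s_i}` applies `permK` coordinatewise. -/
def sOp {n N : ℕ} (ε : Bool) (i : ℕ) (hi : i + 1 < n) (f : VV n N) : VV n N :=
  fun m =>
    ((z (fin1 i hi) - z (fin2 i hi)) *
          permK (Equiv.swap (fin1 i hi) (fin2 i hi))
            (f (m ∘ ⇑(Equiv.swap (fin1 i hi) (fin2 i hi))))
        - sign' ε * permK (Equiv.swap (fin1 i hi) (fin2 i hi)) (f m))
      / (z (fin1 i hi) - z (fin2 i hi))
    + sign' ε / (z (fin1 i hi) - z (fin2 i hi)) * f m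

/-- The scalar operator `ŝ_i^±` on `ℂ(z_1,…,z_n,h)`:
`ŝ_i^± f = (z_i−z_{i+1} ± h)/(z_i−z_{i+1}) · f^{s_i} ∓ h/(z_i−z_{i+1}) · f`. -/
def hOp {n : ℕ} (ε : Bool) (i : ℕ) (hi : i + 1 < n) (f : K n) : K n :=
  ((z (fin1 i hi) - z (fin2 i hi) + sign' ε) *
      permK (Equiv.swap (fin1 i hi) (fin2 i hi)) f
    - sign' ε * f) / (z (fin1 i hi) - z (fin2 i hi))

open Equiv

lemma permK_algebraMap {n : ℕ} (σ : Perm (Fin n)) (p : MvPolynomial (Fin n ⊕ Unit) ℂ) :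
    permK σ (algebraMap _ (K n) p) =
      algebraMap _ (K n) (MvPolynomial.rename (Equiv.sumCongr σ (Equiv.refl Unit)) p) :=
  IsFractionRing.ringEquivOfRingEquiv_algebraMap _ p

lemma permK_z {n : ℕ} (σ : Perm (Fin n)) (i : Fin n) : permK σ (z i) = z (σ i) := by
  rw [z, permK_algebraMap, MvPolynomial.rename_X]; rfl

lemma permK_hvar {n : ℕ} (σ : Perm (Fin n)) : permK σ (hvar : K n) = hvar := by
  rw [hvar, permK_algebraMap, MvPolynomial.rename_X]; rfl

lemma permK_sign' {n : ℕ} (σ : Perm (Fin n)) (ε : Bool) : permK σ (sign' ε : K n) = sign' ε := by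
  cases ε <;> simp [sign', permK_hvar]

lemma permK_one {n : ℕ} : permK (1 : Perm (Fin n)) = RingEquiv.refl (K n) := by
  rw [permK, Perm.one_def, Equiv.sumCongr_refl, MvPolynomial.renameEquiv_refl]
  exact IsFractionRing.ringEquivOfRingEquiv_refl

lemma permK_mul {n : ℕ} (σ τ : Perm (Fin n)) : permK (σ * τ) = (permK τ).trans (permK σ) := by
  rw [permK, permK, permK, ← IsFractionRing.ringEquivOfRingEquiv_comp]
  congr 1
  refine RingEquiv.ext fun p => ?_
  simp [MvPolynomial.rename_rename, Perm.mul_def, ← Equiv.coe_trans, Equiv.sumCongr_trans]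

lemma z_injective {n : ℕ} : Function.Injective (z : Fin n → K n) := fun _ _ h =>
  Sum.inl_injective (MvPolynomial.X_injective
    (IsFractionRing.injective (MvPolynomial (Fin n ⊕ Unit) ℂ) (K n) h))

lemma fin1_ne_fin2 {n : ℕ} (i : ℕ) (hi : i + 1 < n) : fin1 i hi ≠ fin2 i hi := by
  simp [fin1, fin2, Fin.ext_iff]

lemma sOp_apply_eq_iff {n N : ℕ} (ε : Bool) (i : ℕ) (hi : i + 1 < n) (f : VV n N)
    (m : Fin n → Fin N) :
    sOp ε i hi f m = f m ↔ f (m ∘ swap (fin1 i hi) (fin2 i hi)) = hOp ε i hi (f m) := by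
  have hΔ : z (fin1 i hi) - z (fin2 i hi) ≠ 0 :=
    sub_ne_zero.mpr (z_injective.ne (fin1_ne_fin2 i hi))
  have hsΔ : permK (swap (fin1 i hi) (fin2 i hi)) (z (fin1 i hi) - z (fin2 i hi)) =
      -(z (fin1 i hi) - z (fin2 i hi)) := by
    rw [map_sub, permK_z, permK_z, swap_apply_left, swap_apply_right, neg_sub]
  have hss (x : K n) :
      permK (swap (fin1 i hi) (fin2 i hi)) (permK (swap (fin1 i hi) (fin2 i hi)) x) = x := by
    rw [← RingEquiv.trans_apply, ← permK_mul, swap_mul_self, permK_one, RingEquiv.refl_apply]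
  rw [← (permK (swap (fin1 i hi) (fin2 i hi))).injective.eq_iff, sOp, hOp, eq_div_iff hΔ]
  simp only [map_add, map_sub, map_mul, map_div₀, hss, permK_sign', hsΔ]
  field_simp
  constructor <;> intro h <;> linear_combination h

lemma closure_adjacent_swaps_eq_top (n : ℕ) :
    Submonoid.closure {σ : Perm (Fin n) | ∃ i hi, σ = swap (fin1 i hi) (fin2 i hi)} = ⊤ := by
  cases n with
  | zero => exact eq_top_iff.2 fun σ _ => Subsingleton.elim σ 1 ▸ one_mem _
  | succ k =>
    refine top_unique <| (Perm.mclosure_swap_castSucc_succ k).ge.trans (Submonoid.closure_mono ?_)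
    rintro _ ⟨j, rfl⟩
    exact ⟨j, Nat.succ_lt_succ j.isLt, rfl⟩

def intertwiningSubmonoid {α β X : Type*} (ρ : Perm α →* Function.End X) (f : (α → β) → X) :
    Submonoid (Perm α) where
  carrier := {σ | ∀ m, f (m ∘ ⇑σ⁻¹) = ρ σ (f m)}
  one_mem' _ := by simp only [inv_one, Perm.coe_one, Function.comp_id, map_one]; rfl
  mul_mem' {σ τ} hσ hτ m := by
    rw [mul_inv_rev, Perm.coe_mul, ← Function.comp_assoc, hσ, hτ, map_mul]; rfl

/-- The coordinate `f_I` is `f m` for the word `m` encoding `I`, the decomposition `σ(I)` is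
encoded by `m ∘ σ⁻¹`, and the action `ŝ^±` is any monoid homomorphism `ρ` sending each
elementary transposition to `ŝ_i^±`. -/
theorem statement4 (n N : ℕ) (ε : Bool) (f : VV n N)
    (ρ : Equiv.Perm (Fin n) →* Function.End (K n))
    (hρ : ∀ (i : ℕ) (hi : i + 1 < n),
      ρ (Equiv.swap (fin1 i hi) (fin2 i hi)) = hOp ε i hi) :
    (∀ (i : ℕ) (hi : i + 1 < n), sOp ε i hi f = f) ↔
    (∀ (σ : Equiv.Perm (Fin n)) (m : Fin n → Fin N),
      f (m ∘ ⇑σ⁻¹) = ρ σ (f m)) := by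
  simp only [funext_iff, sOp_apply_eq_iff]
  constructor
  · intro H σ
    suffices ⊤ ≤ intertwiningSubmonoid ρ f from this (Submonoid.mem_top σ)
    rw [← closure_adjacent_swaps_eq_top, Submonoid.closure_le]
    rintro _ ⟨i, hi, rfl⟩ m
    rw [swap_inv, hρ]
    exact H i hi m
  · intro H i hi m
    rw [← hρ, ← swap_inv]
    exact H _ m

end GRTV
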